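/- Fix positive integers k, t with k ≥ t+2. Define m_{i,j} for i, j ≥ 1 by: m_{i,j} is the sum of weights of partial (k-t-1, t)-Motzkin paths of length i-1 ending at height j-1. Then for all i ≥ 1, ∑_{j=1}^{i} m_{i,j} · (1 + t + t² + ... + t^{j-1}) = k^{i-1}. -/

import Mathlib

/-- A Motzkin step: up, down, or horizontal. -/
inductive Step | U | D | H
deriving DecidableEq

instance instFintypeStep : Fintype Step :=
  ⟨{Step.U, Step.D, Step.H}, fun x => by cases x <;> simp⟩

/-- The height change of one step. -/
def Step.val : Step → ℤ
  | Step.U => 1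
  | Step.D => -1
  | Step.H => 0

/-- The weight of a step: up steps weigh `1`, down steps `t`, horizontal steps `k`. -/
def Step.wt (k t : ℕ) : Step → ℕ
  | Step.U => 1
  | Step.D => t
  | Step.H => k

/-- The height of the path `p` after its first `m` steps. -/
def pathHeight {n : ℕ} (p : Fin n → Step) (m : ℕ) : ℤ :=
  ∑ i ∈ Finset.univ.filter (fun i : Fin n => (i : ℕ) < m), (p i).val

/-- A partial Motzkin path: never goes below the x-axis. -/
def IsPartialMotzkin {n : ℕ} (p : Fin n → Step) : Prop :=
  ∀ m ≤ n, 0 ≤ pathHeight p m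

/-- A (complete) Motzkin path: never below the x-axis and ends on the x-axis. -/
def IsMotzkin {n : ℕ} (p : Fin n → Step) : Prop :=
  IsPartialMotzkin p ∧ pathHeight p n = 0

instance {n : ℕ} (p : Fin n → Step) : Decidable (IsPartialMotzkin p) :=
  Nat.decidableBallLE n _

instance {n : ℕ} (p : Fin n → Step) : Decidable (IsMotzkin p) :=
  inferInstanceAs (Decidable (_ ∧ _))

/-- The weight of a weighted Motzkin path. -/
def pathWt {n : ℕ} (k t : ℕ) (p : Fin n → Step) : ℕ := ∏ i, (p i).wt k t

/-- Sum of the weights of all `(k,t)`-Motzkin paths of length `n`. -/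
def motzkinWt (k t n : ℕ) : ℕ :=
  ∑ p ∈ Finset.univ.filter (fun p : Fin n → Step => IsMotzkin p), pathWt k t p

/-- Sum of the weights of all partial `(k,t)`-Motzkin paths of length `n`
ending at height `h`. -/
def partialWt (k t n h : ℕ) : ℕ :=
  ∑ p ∈ Finset.univ.filter
      (fun p : Fin n → Step => IsPartialMotzkin p ∧ pathHeight p n = (h : ℤ)),
    pathWt k t p

/-!
Weight a partial path of final height `h` by its path weight times `[h+1]_t = 1 + t + ⋯ + t^h`.
Appending a step to a path at height `h` multiplies this total by `a + t + 1`: the up, horizontal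
and down steps contribute `[h+2]_t + a [h+1]_t + t [h]_t`, and `[h+2]_t + t [h]_t = (1 + t) [h+1]_t`.
At height `0` the forbidden down step would contribute `t [0]_t = 0`, so the identity holds there
too. Hence the total over paths of length `n` is `(a + t + 1)^n`, which is `k^n` for `a = k - t - 1`.
-/

open Finset

lemma Step.sum_univ {M : Type*} [AddCommMonoid M] (f : Step → M) :
    ∑ s : Step, f s = f .U + f .D + f .H := by
  rw [show (univ : Finset Step) = {Step.U, Step.D, Step.H} from rfl,
    sum_insert (by decide), sum_insert (by decide), sum_singleton, add_assoc]

section PathLemmas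

variable {n : ℕ}

lemma pathHeight_of_le (p : Fin n → Step) {m : ℕ} (h : n ≤ m) :
    pathHeight p m = ∑ i, (p i).val := by
  rw [pathHeight, filter_true_of_mem fun i _ => i.isLt.trans_le h]

lemma pathHeight_le (p : Fin n → Step) : pathHeight p n ≤ n := by
  rw [pathHeight_of_le p le_rfl]
  calc ∑ i, (p i).val ≤ ∑ _i : Fin n, (1 : ℤ) :=
        sum_le_sum fun i _ => by cases p i <;> simp [Step.val]
    _ = n := by simp

lemma pathHeight_snoc_of_le (p : Fin n → Step) (s : Step) {m : ℕ} (hm : m ≤ n) :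
    pathHeight (Fin.snoc p s) m = pathHeight p m := by
  simp only [pathHeight, sum_filter, Fin.sum_univ_castSucc, Fin.snoc_castSucc, Fin.val_castSucc,
    Fin.val_last, if_neg hm.not_gt, add_zero]

lemma pathHeight_snoc_self (p : Fin n → Step) (s : Step) :
    pathHeight (Fin.snoc p s) (n + 1) = pathHeight p n + s.val := by
  simp [pathHeight_of_le, Fin.sum_univ_castSucc]

lemma isPartialMotzkin_snoc (p : Fin n → Step) (s : Step) :
    IsPartialMotzkin (Fin.snoc p s) ↔ IsPartialMotzkin p ∧ 0 ≤ pathHeight p n + s.val := by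
  constructor
  · intro H
    refine ⟨fun m hm => ?_, ?_⟩
    · rw [← pathHeight_snoc_of_le p s hm]
      exact H m (by omega)
    · rw [← pathHeight_snoc_self]
      exact H (n + 1) le_rfl
  · rintro ⟨H, hlast⟩ m hm
    obtain hm | rfl := Nat.lt_or_eq_of_le hm
    · rw [pathHeight_snoc_of_le p s (by omega)]
      exact H m (by omega)
    · rwa [pathHeight_snoc_self]

lemma pathWt_snoc (a t : ℕ) (p : Fin n → Step) (s : Step) :
    pathWt a t (Fin.snoc p s) = pathWt a t p * s.wt a t := by
  simp [pathWt, Fin.prod_univ_castSucc]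

end PathLemmas

lemma geom_sum_add_two_add_mul_geom_sum {R : Type*} [CommSemiring R] (x : R) (h : ℕ) :
    ∑ r ∈ range (h + 2), x ^ r + x * ∑ r ∈ range h, x ^ r =
      (1 + x) * ∑ r ∈ range (h + 1), x ^ r := by
  rw [geom_sum_succ (n := h + 1), geom_sum_succ (n := h)]
  ring

def heightWeightedWt (a t : ℕ) {n : ℕ} (p : Fin n → Step) : ℕ :=
  if IsPartialMotzkin p then pathWt a t p * ∑ r ∈ range ((pathHeight p n).toNat + 1), t ^ r
  else 0

lemma sum_step_wt_mul_geom_sum (a t h : ℕ) :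
    ∑ s : Step, s.wt a t * (if 0 ≤ (h : ℤ) + s.val then
        ∑ r ∈ range (((h : ℤ) + s.val).toNat + 1), t ^ r else 0) =
      (a + t + 1) * ∑ r ∈ range (h + 1), t ^ r := by
  rw [Step.sum_univ]
  rcases h with _ | h
  · simp [Step.wt, Step.val, geom_sum_succ]
    ring
  · simp only [Step.wt, Step.val, if_pos (by omega : (0 : ℤ) ≤ (h + 1 : ℕ) + 1),
      if_pos (by omega : (0 : ℤ) ≤ (h + 1 : ℕ) + -1), if_pos (by omega : (0 : ℤ) ≤ (h + 1 : ℕ) + 0),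
      show (((h + 1 : ℕ) : ℤ) + 1).toNat = h + 2 by omega,
      show (((h + 1 : ℕ) : ℤ) + -1).toNat = h by omega,
      show (((h + 1 : ℕ) : ℤ) + 0).toNat = h + 1 by omega]
    linear_combination geom_sum_add_two_add_mul_geom_sum t (h + 1)

lemma sum_heightWeightedWt_snoc {n : ℕ} (a t : ℕ) (p : Fin n → Step) :
    ∑ s : Step, heightWeightedWt a t (Fin.snoc p s) = (a + t + 1) * heightWeightedWt a t p := by
  by_cases hp : IsPartialMotzkin p
  · obtain ⟨h, hh⟩ : ∃ h : ℕ, pathHeight p n = h := ⟨_, (Int.toNat_of_nonneg (hp n le_rfl)).symm⟩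
    have hsnoc : ∀ s, heightWeightedWt a t (Fin.snoc p s) = pathWt a t p * (s.wt a t *
        if 0 ≤ (h : ℤ) + s.val then ∑ r ∈ range (((h : ℤ) + s.val).toNat + 1), t ^ r else 0) := by
      intro s
      simp only [heightWeightedWt, isPartialMotzkin_snoc, hp, true_and, pathHeight_snoc_self,
        pathWt_snoc, hh]
      split_ifs <;> ring
    rw [sum_congr rfl fun s _ => hsnoc s, ← mul_sum, sum_step_wt_mul_geom_sum, heightWeightedWt,
      if_pos hp, hh, Int.toNat_natCast]
    ring
  · simp [heightWeightedWt, isPartialMotzkin_snoc, hp]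

lemma sum_heightWeightedWt (a t n : ℕ) :
    ∑ p : Fin n → Step, heightWeightedWt a t p = (a + t + 1) ^ n := by
  induction n with
  | zero =>
    have hp : IsPartialMotzkin (default : Fin 0 → Step) := by
      intro m hm
      simp [Nat.le_zero.mp hm, pathHeight]
    rw [Fintype.sum_unique, heightWeightedWt, if_pos hp]
    simp [pathWt, pathHeight]
  | succ n ih =>
    rw [← (Fin.snocEquiv fun _ => Step).sum_comp, Fintype.sum_prod_type_right]
    change ∑ p : Fin n → Step, ∑ s, heightWeightedWt a t (Fin.snoc p s) = _
    simp_rw [sum_heightWeightedWt_snoc, ← mul_sum, ih, pow_succ, mul_comm]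

lemma sum_partialWt_mul_geom_sum (a t n : ℕ) :
    ∑ h ∈ range (n + 1), partialWt a t n h * ∑ r ∈ range (h + 1), t ^ r = (a + t + 1) ^ n := by
  have hmaps : ∀ p ∈ univ.filter (IsPartialMotzkin (n := n)),
      (pathHeight p n).toNat ∈ range (n + 1) := by
    intro p _
    have := pathHeight_le p
    simp only [mem_range]
    omega
  rw [← sum_heightWeightedWt]
  simp only [heightWeightedWt]
  rw [← sum_filter, ← sum_fiberwise_of_maps_to hmaps]
  refine sum_congr rfl fun h _ => ?_
  rw [partialWt, sum_mul, filter_filter]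
  refine sum_congr (filter_congr fun p _ => ?_) fun p hp => ?_
  · exact and_congr_right fun hp => by have := hp n le_rfl; omega
  · rw [(mem_filter.mp hp).2.2]

theorem stmt_9_general (k t : ℕ) (hk : t + 2 ≤ k) (i : ℕ) (hi : 1 ≤ i) :
    ∑ j ∈ Finset.Icc 1 i,
        partialWt (k - t - 1) t (i - 1) (j - 1) * ∑ r ∈ Finset.range j, t ^ r =
      k ^ (i - 1) := by
  obtain ⟨n, rfl⟩ : ∃ n, i = n + 1 := ⟨i - 1, by omega⟩
  rw [← Ico_add_one_right_eq_Icc, sum_Ico_eq_sum_range]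
  simp only [add_tsub_cancel_right, add_comm 1]
  rw [sum_partialWt_mul_geom_sum, show k - t - 1 + t + 1 = k by omega]

/-- `∑_{j=1}^i m_{i,j} (1 + t + ⋯ + t^{j-1}) = k^{i-1}`, where `m_{i,j}` is the total
weight of partial `(k-t-1, t)`-Motzkin paths of length `i-1` ending at height `j-1`. -/
theorem stmt_9 (k t : ℕ) (ht : 1 ≤ t) (hk : t + 2 ≤ k) (i : ℕ) (hi : 1 ≤ i) :
    ∑ j ∈ Finset.Icc 1 i,
        partialWt (k - t - 1) t (i - 1) (j - 1) * ∑ r ∈ Finset.range j, t ^ r =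
      k ^ (i - 1) :=
  stmt_9_general k t hk i hi
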